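/- Let G be a minimally nonperfectly divisible graph and v ∈ V(G). Then there exists a maximum clique K of G with v ∈ K and N(v) ⊄ K. -/
import Mathlib


open SimpleGraph

variable {V : Type}

/-- The clique number of the subgraph of `G` induced on `S`. -/
noncomputable def omegaOn (G : SimpleGraph V) (S : Set V) : ℕ :=
  sSup {n | ∃ s : Finset V, ↑s ⊆ S ∧ G.IsNClique n s}

/-- The subgraph of `G` induced on `S` is a perfect graph. -/
def IsPerfectOn (G : SimpleGraph V) (S : Set V) : Prop :=
  ∀ T : Set V, T ⊆ S → (G.induce T).chromaticNumber = (omegaOn G T : ℕ∞)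

/-- Every nonempty induced subgraph of `G[S]` admits a perfect division. -/
def PerfDivOn (G : SimpleGraph V) (S : Set V) : Prop :=
  ∀ H : Set V, H ⊆ S → H.Nonempty →
    ∃ A B : Set V, A ∪ B = H ∧ Disjoint A B ∧
      IsPerfectOn G A ∧ omegaOn G B < omegaOn G H

/-- `G` is minimally nonperfectly divisible. -/
def MNPD (G : SimpleGraph V) : Prop :=
  ¬ PerfDivOn G Set.univ ∧ ∀ S : Set V, S ≠ Set.univ → PerfDivOn G S

/-- The external neighbourhood `N(X)`. -/
def extNbhd (G : SimpleGraph V) (X : Set V) : Set V :=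
  {v | v ∉ X ∧ ∃ x ∈ X, G.Adj v x}

set_option linter.unusedSectionVars false

section Aux
variable [Fintype V] (G : SimpleGraph V)

lemma omegaOn_set_nonempty (S : Set V) :
    {n | ∃ s : Finset V, ↑s ⊆ S ∧ G.IsNClique n s}.Nonempty :=
  ⟨0, ∅, by simp⟩

lemma omegaOn_bddAbove (S : Set V) :
    BddAbove {n | ∃ s : Finset V, ↑s ⊆ S ∧ G.IsNClique n s} := by
  refine ⟨Fintype.card V, fun n hn => ?_⟩
  obtain ⟨s, _, hc⟩ := hn
  exact hc.2 ▸ s.card_le_univ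

lemma omegaOn_exists (S : Set V) :
    ∃ s : Finset V, ↑s ⊆ S ∧ G.IsNClique (omegaOn G S) s :=
  Nat.sSup_mem (omegaOn_set_nonempty G S) (omegaOn_bddAbove G S)

lemma le_omegaOn {S : Set V} {n : ℕ} {s : Finset V} (hs : ↑s ⊆ S)
    (hc : G.IsNClique n s) : n ≤ omegaOn G S :=
  le_csSup (omegaOn_bddAbove G S) ⟨s, hs, hc⟩

lemma omegaOn_mono {S T : Set V} (h : S ⊆ T) : omegaOn G S ≤ omegaOn G T := by
  obtain ⟨s, hs, hc⟩ := omegaOn_exists G S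
  exact le_omegaOn G (hs.trans h) hc
end Aux

section Aux2
variable [Fintype V] (G : SimpleGraph V)

lemma omegaOn_le_chromatic (T : Set V) :
    (omegaOn G T : ℕ∞) ≤ (G.induce T).chromaticNumber := by
  obtain ⟨s, hs, hc⟩ := omegaOn_exists G T
  have finj : Function.Injective (fun x : {x // x ∈ s} => (⟨x.1, hs x.2⟩ : ↥T)) := by
    intro a b h
    simp only [Subtype.mk.injEq] at h
    exact Subtype.ext h
  let f : {x // x ∈ s} ↪ ↥T := ⟨fun x => ⟨x.1, hs x.2⟩, finj⟩
  let t : Finset ↥T := s.attach.map f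
  have htcard : t.card = omegaOn G T := by
    simp [t, Finset.card_map, Finset.card_attach, hc.2]
  have htclique : (G.induce T).IsClique ↑t := by
    intro x hx y hy hxy
    simp only [t, Finset.coe_map, Set.mem_image, Finset.mem_coe, Finset.mem_map] at hx hy
    obtain ⟨a, ha, rfl⟩ := hx
    obtain ⟨b, hb, rfl⟩ := hy
    have : G.Adj a.1 b.1 := by
      refine hc.1 a.2 b.2 ?_
      intro h
      exact hxy (by simp [f, Subtype.ext (h : a.1 = b.1)])
    simpa [comap_adj, f] using this
  calc (omegaOn G T : ℕ∞) = (t.card : ℕ∞) := by rw [htcard]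
    _ ≤ (G.induce T).chromaticNumber := htclique.card_le_chromaticNumber
end Aux2

section Aux3
variable [Fintype V] (G : SimpleGraph V)

lemma isPerfectOn_of_isClique {A : Set V} (h : G.IsClique A) : IsPerfectOn G A := by
  classical
  intro T hT
  refine le_antisymm ?_ (omegaOn_le_chromatic G T)
  have ht : (T.toFinset : Set V) = T := Set.coe_toFinset T
  have hcl : G.IsClique T := h.subset hT
  have hclique : G.IsNClique T.toFinset.card T.toFinset := ⟨by rwa [ht], rfl⟩
  have h1 : T.toFinset.card ≤ omegaOn G T := le_omegaOn G ht.subset hclique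
  have h2 : (G.induce T).chromaticNumber ≤ (T.toFinset.card : ℕ∞) := by
    have := (G.induce T).colorable_of_fintype.chromaticNumber_le
    rwa [Set.toFinset_card]
  exact h2.trans (by exact_mod_cast h1)

lemma isPerfectOn_insert {A : Set V} {v : V} (hA : IsPerfectOn G A)
    (hv : G.IsClique (G.neighborSet v)) : IsPerfectOn G (insert v A) := by
  classical
  intro T hT
  by_cases hvT : v ∈ T
  · set m := omegaOn G T with hm
    have hm1 : 1 ≤ m := le_omegaOn G (by simpa using hvT) (isNClique_singleton.mpr rfl : G.IsNClique 1 {v})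
    set T' : Set V := T \ {v} with hT'def
    have hT'A : T' ⊆ A := fun x hx => ((hT hx.1).resolve_left hx.2)
    have hωT' : omegaOn G T' ≤ m := omegaOn_mono G Set.diff_subset
    have hcol' : (G.induce T').Colorable m := by
      rw [← chromaticNumber_le_iff_colorable, hA T' hT'A]
      exact_mod_cast hωT'
    obtain ⟨c⟩ := hcol'
    -- neighbours of v inside T'
    set W : Finset ↥T' := Finset.univ.filter (fun u => G.Adj v u.1) with hW
    have hWclique : G.IsNClique (W.card + 1) (insert v (W.image Subtype.val)) := by
      constructor
      · have hmem : ∀ x ∈ (insert v (W.image Subtype.val) : Finset V),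
            x = v ∨ x ∈ G.neighborSet v := by
          intro x hx
          rcases Finset.mem_insert.mp hx with h | h
          · exact Or.inl h
          · obtain ⟨b, hb, rfl⟩ := Finset.mem_image.mp h
            exact Or.inr (Finset.mem_filter.mp hb).2
        intro x hx y hy hxy
        rcases hmem x (Finset.mem_coe.mp hx) with rfl | hx' <;>
          rcases hmem y (Finset.mem_coe.mp hy) with h' | hy'
        · exact absurd h'.symm hxy
        · exact hy'
        · exact h' ▸ hx'.symm
        · exact hv hx' hy' hxy
      · rw [Finset.card_insert_of_notMem, Finset.card_image_of_injective _ Subtype.val_injective]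
        intro hmem
        simp only [Finset.mem_image, hW, Finset.mem_filter, Finset.mem_univ, true_and] at hmem
        obtain ⟨a, ha, hav⟩ := hmem
        exact a.2.2 (by simp [hav])
    have hsubT : ↑(insert v (W.image Subtype.val)) ⊆ T := by
      intro x hx
      simp only [Finset.coe_insert, Set.mem_insert_iff, Finset.coe_image,
        Set.mem_image, Finset.mem_coe] at hx
      rcases hx with rfl | ⟨a, _, rfl⟩
      · exact hvT
      · exact a.2.1
    have hWcard : W.card + 1 ≤ m := le_omegaOn G hsubT hWclique
    have himg : (W.image c).card < m := lt_of_le_of_lt Finset.card_image_le (by omega)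
    have : ((W.image c)ᶜ : Finset (Fin m)).Nonempty := by
      rw [← Finset.card_pos, Finset.card_compl, Fintype.card_fin]
      omega
    obtain ⟨a, ha⟩ := this
    rw [Finset.mem_compl] at ha
    -- build the coloring of T
    have hmem' : ∀ (u : ↥T), (u : V) ≠ v → (u : V) ∈ T' := fun u h => ⟨u.2, h⟩
    let f : ↥T → Fin m := fun u =>
      if h : (u : V) = v then a else c ⟨u.1, hmem' u h⟩
    have hvalid : ∀ {x y : ↥T}, (G.induce T).Adj x y → f x ≠ f y := by
      intro x y hadj
      have hGadj : G.Adj x.1 y.1 := by simpa [comap_adj] using hadj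
      by_cases hx : (x : V) = v <;> by_cases hy : (y : V) = v
      · exact absurd (hy ▸ hx ▸ hGadj) (G.irrefl)
      · simp only [f, dif_pos hx, dif_neg hy]
        intro hcon
        apply ha
        rw [hcon]
        refine Finset.mem_image_of_mem c ?_
        simp only [hW, Finset.mem_filter, Finset.mem_univ, true_and]
        exact hx ▸ hGadj
      · simp only [f, dif_pos hy, dif_neg hx]
        intro hcon
        apply ha
        rw [← hcon]
        refine Finset.mem_image_of_mem c ?_
        simp only [hW, Finset.mem_filter, Finset.mem_univ, true_and]
        exact (hy ▸ hGadj).symm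
      · simp only [f, dif_neg hx, dif_neg hy]
        have : (G.induce T').Adj ⟨x.1, hmem' x hx⟩ ⟨y.1, hmem' y hy⟩ := by
          simpa [comap_adj] using hGadj
        exact c.valid this
    have hcolT : (G.induce T).Colorable m := ⟨Coloring.mk f hvalid⟩
    exact le_antisymm hcolT.chromaticNumber_le (omegaOn_le_chromatic G T)
  · exact hA T (fun x hx => (hT hx).resolve_left (fun h => hvT (h ▸ hx)))
end Aux3

theorem stmt_7 [Fintype V] (G : SimpleGraph V) (hG : MNPD G) (v : V) :
    ∃ K : Finset V, G.IsNClique (omegaOn G Set.univ) K ∧ v ∈ K ∧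
      ¬ (G.neighborSet v ⊆ ↑K) := by
  classical
  have hnodiv : ∀ A B : Set V, A ∪ B = Set.univ → Disjoint A B → IsPerfectOn G A →
      omegaOn G B < omegaOn G Set.univ → False := by
    intro A B h1 h2 h3 h4
    apply hG.1
    intro H hH hne
    by_cases hHu : H = Set.univ
    · subst hHu; exact ⟨A, B, h1, h2, h3, h4⟩
    · exact hG.2 H hHu H subset_rfl hne
  have homega1 : 1 ≤ omegaOn G Set.univ :=
    le_omegaOn G (by simp) (isNClique_singleton.mpr rfl : G.IsNClique 1 {v})
  by_cases huniv : Set.univ = ({v} : Set V)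
  · exfalso
    refine hnodiv {v} ∅ (by simp [huniv]) (by simp) ?_ ?_
    · exact isPerfectOn_of_isClique G (by intro x hx y hy hxy; simp_all)
    · refine lt_of_le_of_lt ?_ homega1
      refine Nat.le_of_lt_succ (Nat.lt_succ_of_le ?_)
      obtain ⟨s, hs, hc⟩ := omegaOn_exists G (∅ : Set V)
      have hse : s = ∅ := Finset.coe_eq_empty.mp (Set.subset_empty_iff.mp hs)
      have := hc.2
      rw [hse] at this
      simp at this
      omega
  · -- `Set.univ \\ {v}` is a proper nonempty subset
    have hne : (Set.univ \ {v} : Set V).Nonempty := by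
      rw [Set.diff_nonempty]
      intro hsub
      exact huniv (le_antisymm hsub (Set.subset_univ _))
    have hvnot : v ∉ (Set.univ \ {v} : Set V) := by simp
    have hsubne : (Set.univ \ {v} : Set V) ≠ Set.univ := by
      intro h
      rw [h] at hvnot
      exact hvnot (Set.mem_univ v)
    obtain ⟨A, B, hAB, hdisj, hperf, hlt⟩ :=
      hG.2 _ hsubne (Set.univ \ {v}) subset_rfl hne
    have hAsub : A ⊆ Set.univ \ {v} := hAB ▸ Set.subset_union_left
    have hBsub : B ⊆ Set.univ \ {v} := hAB ▸ Set.subset_union_right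
    have hlt' : omegaOn G B < omegaOn G Set.univ :=
      lt_of_lt_of_le hlt (omegaOn_mono G (Set.subset_univ _))
    -- Part 1: v lies in some maximum clique
    have hpart1 : ∃ K : Finset V, G.IsNClique (omegaOn G Set.univ) K ∧ v ∈ K := by
      by_contra hcon
      push_neg at hcon
      refine hnodiv A (insert v B) ?_ ?_ hperf ?_
      · rw [Set.union_insert, hAB, Set.insert_diff_singleton]
        simp
      · refine Set.disjoint_left.mpr fun x hxA hxB => ?_
        rcases hxB with rfl | hxB
        · exact (hAsub hxA).2 rfl
        · exact Set.disjoint_left.mp hdisj hxA hxB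
      · obtain ⟨s, hs, hc⟩ := omegaOn_exists G (insert v B)
        have hle : omegaOn G (insert v B) ≤ omegaOn G Set.univ :=
          omegaOn_mono G (Set.subset_univ _)
        rcases lt_or_eq_of_le hle with h | h
        · exact h
        · exfalso
          have hvs : v ∉ s := hcon s (h ▸ hc)
          have hsB : ↑s ⊆ B := by
            intro x hx
            rcases hs hx with h' | h'
            · exact absurd (h' ▸ hx) (by exact_mod_cast hvs)
            · exact h'
          have := le_omegaOn G hsB hc
          omega
    obtain ⟨K, hK, hvK⟩ := hpart1
    by_contra hcon
    push_neg at hcon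
    have hNK : G.neighborSet v ⊆ ↑K := hcon K hK hvK
    have hNclique : G.IsClique (G.neighborSet v) := by
      intro x hx y hy hxy
      exact hK.1 (hNK hx) (hNK hy) hxy
    refine hnodiv (insert v A) B ?_ ?_ (isPerfectOn_insert G hperf hNclique) hlt'
    · rw [Set.insert_union, hAB, Set.insert_diff_singleton]
      simp
    · refine Set.disjoint_left.mpr fun x hxA hxB => ?_
      rcases hxA with rfl | hxA
      · exact (hBsub hxB).2 rfl
      · exact Set.disjoint_left.mp hdisj hxA hxB
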